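/- arXiv:1204.3032 — 2 statements merged into one kernel-verified Lean document; each statement's English description precedes it below -/
import Mathlib

section
/- Let csi, d_r, d_i, g_r, g_i be real numbers with d_i ≠ 0, let ξ₁ ∈ ℂ, and let M, ψ be meromorphic on a neighborhood of ξ₁ and satisfy, on a punctured neighborhood of ξ₁, the CGL3 traveling-wave system: M''/(2M) − (M')²/(4M²) − csi·M'/(2M) − ψ² + d_r·M + g_i = 0 and ψ' + ψ·M'/M − csi·ψ + d_i·M − g_r = 0. If M has a pole at ξ₁, then: the pole of M at ξ₁ is double; ψ has a simple pole at ξ₁; and writing m₀ = lim_{ξ→ξ₁} (ξ − ξ₁)²·M(ξ), the residue of ψ at ξ₁ equals d_i·m₀/3 and m₀ satisfies the quadratic relation d_i²·m₀² − 9·d_r·m₀ − 18 = 0. In particular m₀ can take at most two distinct values. -/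
open Filter Topology

/-- `f` has a pole at `z`. -/
def IsPole (f : ℂ → ℂ) (z : ℂ) : Prop :=
  Tendsto (fun w => ‖f w‖) (𝓝[≠] z) atTop

/-!
Dominant balance. Write `M ~ m₀ (ξ - ξ₁) ^ (-n)` and `ψ ~ r (ξ - ξ₁) ^ k` with `n > 0`,
`m₀ r ≠ 0`. In the second equation `ψ' + ψ M'/M ~ (k - n) r (ξ - ξ₁) ^ (k - 1)` can only be
balanced by `d_i M ~ d_i m₀ (ξ - ξ₁) ^ (-n)`, which forces `k = 1 - n` and
`(1 - 2n) r + d_i m₀ = 0`. In the first equation `M''/(2M) - M'²/(4M²)` contributes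
`n (n + 2) / 4 · (ξ - ξ₁) ^ (-2)` and `ψ²` contributes `r² (ξ - ξ₁) ^ (2 - 2n)`; for `n = 1` the
former and for `n ≥ 3` the latter is the only term of lowest order, so `n = 2` and
`2 - r² + d_r m₀ = 0`. Substituting `r = d_i m₀ / 3` gives the quadratic relation.
-/

variable {𝕜 : Type*} [NontriviallyNormedField 𝕜]

/-- `f z = c (z - x) ^ m + o((z - x) ^ m)` as `z → x`, `z ≠ x`; the coefficient `c` may vanish. -/
def HasLeadingTermAt (f : 𝕜 → 𝕜) (m : ℤ) (c x : 𝕜) : Prop :=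
  Tendsto (fun z => (z - x) ^ (-m) * f z) (𝓝[≠] x) (𝓝 c)

lemma tendsto_sub_zpow_nhdsNE_zero {x : 𝕜} {j : ℤ} (hj : 0 < j) :
    Tendsto (fun z : 𝕜 => (z - x) ^ j) (𝓝[≠] x) (𝓝 0) := by
  lift j to ℕ using hj.le
  have hcont : Continuous fun z : 𝕜 => (z - x) ^ j := by fun_prop
  simpa [zero_pow (by omega : j ≠ 0)] using (hcont.tendsto x).mono_left nhdsWithin_le_nhds

namespace HasLeadingTermAt

variable {f g : 𝕜 → 𝕜} {m k e : ℤ} {c d x : 𝕜}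

lemma const (a x : 𝕜) : HasLeadingTermAt (fun _ => a) 0 a x := by
  simp [HasLeadingTermAt]

lemma add (hf : HasLeadingTermAt f m c x) (hg : HasLeadingTermAt g m d x) :
    HasLeadingTermAt (fun z => f z + g z) m (c + d) x := by
  simpa only [HasLeadingTermAt, mul_add] using Tendsto.add hf hg

lemma sub (hf : HasLeadingTermAt f m c x) (hg : HasLeadingTermAt g m d x) :
    HasLeadingTermAt (fun z => f z - g z) m (c - d) x := by
  simpa only [HasLeadingTermAt, mul_sub] using Tendsto.sub hf hg

lemma const_mul (a : 𝕜) (hf : HasLeadingTermAt f m c x) :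
    HasLeadingTermAt (fun z => a * f z) m (a * c) x := by
  simpa only [HasLeadingTermAt, mul_left_comm] using Tendsto.const_mul a hf

lemma mul (hf : HasLeadingTermAt f m c x) (hg : HasLeadingTermAt g k d x) :
    HasLeadingTermAt (fun z => f z * g z) (m + k) (c * d) x := by
  refine (Tendsto.mul hf hg).congr' ?_
  filter_upwards [self_mem_nhdsWithin] with z hz
  rw [neg_add, zpow_add₀ (sub_ne_zero.mpr hz)]
  ring

lemma pow (hf : HasLeadingTermAt f m c x) (p : ℕ) :
    HasLeadingTermAt (fun z => f z ^ p) (p * m) (c ^ p) x := by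
  refine (Tendsto.pow hf p).congr' ?_
  filter_upwards [self_mem_nhdsWithin] with z hz
  rw [mul_pow, ← zpow_natCast, ← zpow_mul, neg_mul, mul_comm m]

lemma inv (hf : HasLeadingTermAt f m c x) (hc : c ≠ 0) :
    HasLeadingTermAt (fun z => (f z)⁻¹) (-m) c⁻¹ x := by
  refine (hf.inv₀ hc).congr' ?_
  filter_upwards [self_mem_nhdsWithin] with z hz
  rw [mul_inv, ← zpow_neg, neg_neg]

lemma div (hf : HasLeadingTermAt f m c x) (hg : HasLeadingTermAt g k d x) (hd : d ≠ 0) :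
    HasLeadingTermAt (fun z => f z / g z) (m - k) (c / d) x := by
  simpa only [div_eq_mul_inv, sub_eq_add_neg] using hf.mul (hg.inv hd)

lemma mono (hf : HasLeadingTermAt f m c x) (he : e ≤ m) :
    HasLeadingTermAt f e (if e = m then c else 0) x := by
  rcases he.eq_or_lt with rfl | hlt
  · simpa using hf
  rw [if_neg hlt.ne]
  have h0 := (tendsto_sub_zpow_nhdsNE_zero (x := x) (sub_pos.mpr hlt)).mul hf
  rw [zero_mul] at h0
  refine h0.congr' ?_
  filter_upwards [self_mem_nhdsWithin] with z hz
  rw [← mul_assoc, ← zpow_add₀ (sub_ne_zero.mpr hz)]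
  ring_nf

lemma of_lt (hf : HasLeadingTermAt f m c x) (he : e < m) : HasLeadingTermAt f e 0 x := by
  simpa [he.ne] using hf.mono he.le

lemma eq_zero (hf : HasLeadingTermAt f m c x) (h0 : ∀ᶠ z in 𝓝[≠] x, f z = 0) : c = 0 := by
  refine tendsto_nhds_unique hf (tendsto_const_nhds.congr' ?_)
  filter_upwards [h0] with z hz
  simp [hz]

end HasLeadingTermAt

lemma HasLeadingTermAt.of_eventuallyEq_zpow_smul {f g : 𝕜 → 𝕜} {x : 𝕜} {m : ℤ}
    (hg : ContinuousAt g x) (hf : f =ᶠ[𝓝[≠] x] fun z => (z - x) ^ m • g z) :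
    HasLeadingTermAt f m (g x) x := by
  refine (hg.tendsto.mono_left nhdsWithin_le_nhds).congr' ?_
  filter_upwards [hf, self_mem_nhdsWithin] with z hz hzx
  rw [hz, smul_eq_mul, ← mul_assoc, ← zpow_add₀ (sub_ne_zero.mpr hzx), neg_add_cancel,
    zpow_zero, one_mul]

lemma exists_deriv_eventuallyEq_zpow_smul [CompleteSpace 𝕜] {f g : 𝕜 → 𝕜} {x : 𝕜} {m : ℤ}
    (hg : AnalyticAt 𝕜 g x) (hf : f =ᶠ[𝓝[≠] x] fun z => (z - x) ^ m • g z) :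
    ∃ g₁ : 𝕜 → 𝕜, AnalyticAt 𝕜 g₁ x ∧ g₁ x = m * g x ∧
      deriv f =ᶠ[𝓝[≠] x] fun z => (z - x) ^ (m - 1) • g₁ z := by
  refine ⟨fun z => m * g z + (z - x) * deriv g z, by fun_prop, by simp, ?_⟩
  filter_upwards [hf.nhdsNE_deriv, self_mem_nhdsWithin,
    hg.eventually_analyticAt.filter_mono nhdsWithin_le_nhds] with z hz hzx hgz
  have hzx : z - x ≠ 0 := sub_ne_zero.mpr hzx
  have hpow : HasDerivAt (fun w => (w - x) ^ m) (m * (z - x) ^ (m - 1)) z :=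
    (hasDerivAt_zpow m (z - x) (.inl hzx)).comp z ((hasDerivAt_id z).sub_const x) |>.congr_deriv
      (mul_one _)
  simp only [smul_eq_mul] at hz ⊢
  rw [hz, (hpow.fun_mul hgz.differentiableAt.hasDerivAt).deriv, zpow_sub_one₀ hzx]
  field_simp

lemma HasLeadingTermAt.deriv_of_eventuallyEq_zpow_smul [CompleteSpace 𝕜] {f g : 𝕜 → 𝕜}
    {x : 𝕜} {m : ℤ} (hg : AnalyticAt 𝕜 g x) (hf : f =ᶠ[𝓝[≠] x] fun z => (z - x) ^ m • g z) :
    HasLeadingTermAt (deriv f) (m - 1) (m * g x) x := by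
  obtain ⟨g₁, hg₁, hg₁x, hf'⟩ := exists_deriv_eventuallyEq_zpow_smul hg hf
  exact hg₁x ▸ HasLeadingTermAt.of_eventuallyEq_zpow_smul hg₁.continuousAt hf'

lemma isPole_iff_meromorphicOrderAt_neg {f : ℂ → ℂ} {x : ℂ} (hf : MeromorphicAt f x) :
    IsPole f x ↔ meromorphicOrderAt f x < 0 := by
  rw [IsPole, tendsto_norm_atTop_iff_cobounded]
  exact tendsto_cobounded_iff_meromorphicOrderAt_neg hf

lemma IsPole.exists_eventuallyEq_zpow_smul {f : ℂ → ℂ} {x : ℂ} (h : IsPole f x)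
    (hf : MeromorphicAt f x) :
    ∃ n : ℤ, 0 < n ∧ ∃ g : ℂ → ℂ, AnalyticAt ℂ g x ∧ g x ≠ 0 ∧
      f =ᶠ[𝓝[≠] x] fun z => (z - x) ^ (-n) • g z := by
  have hneg := (isPole_iff_meromorphicOrderAt_neg hf).mp h
  obtain ⟨N, hN⟩ := WithTop.ne_top_iff_exists.mp hneg.ne_top
  rw [← hN] at hneg
  exact ⟨-N, by simpa using hneg, by
    rw [neg_neg]; exact (meromorphicOrderAt_eq_int_iff hf).mp hN.symm⟩

section DominantBalance

variable {M ψ : 𝕜 → 𝕜} {ξ m₀ r csi d_r d_i g_r g_i : 𝕜} {n k : ℤ}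

lemma meromorphicOrderAt_ne_top_of_cgl3_second (hn : 0 < n) (hm₀ : m₀ ≠ 0) (hd : d_i ≠ 0)
    (hM : HasLeadingTermAt M (-n) m₀ ξ)
    (heq : ∀ᶠ z in 𝓝[≠] ξ,
      deriv ψ z + ψ z * deriv M z / M z - csi * ψ z + d_i * M z - g_r = 0) :
    meromorphicOrderAt ψ ξ ≠ ⊤ := by
  intro htop
  have hψ : ψ =ᶠ[𝓝[≠] ξ] 0 := meromorphicOrderAt_eq_top_iff.mp htop
  have hcoef := ((hM.const_mul d_i).sub
    ((HasLeadingTermAt.const g_r ξ).of_lt (by omega : -n < 0))).eq_zero (by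
      filter_upwards [heq, hψ, hψ.nhdsNE_deriv] with z hz hψz hψz'
      simpa [hψz, hψz'] using hz)
  exact mul_ne_zero hd hm₀ (by simpa using hcoef)

variable [CharZero 𝕜]

lemma cgl3_dominant_balance_second (hn : 0 < n) (hm₀ : m₀ ≠ 0) (hr : r ≠ 0) (hd : d_i ≠ 0)
    (hM : HasLeadingTermAt M (-n) m₀ ξ) (hM' : HasLeadingTermAt (deriv M) (-n - 1) (↑(-n) * m₀) ξ)
    (hψ : HasLeadingTermAt ψ k r ξ) (hψ' : HasLeadingTermAt (deriv ψ) (k - 1) (k * r) ξ)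
    (heq : ∀ᶠ z in 𝓝[≠] ξ,
      deriv ψ z + ψ z * deriv M z / M z - csi * ψ z + d_i * M z - g_r = 0) :
    k = 1 - n ∧ (1 - 2 * n) * r + d_i * m₀ = 0 := by
  set e := min (k - 1) (-n)
  have hcoef := HasLeadingTermAt.eq_zero
    (((((hψ'.mono (min_le_left _ _)).add (((hψ.mul hM').div hM hm₀).mono (by omega))).sub
      ((hψ.const_mul csi).of_lt (by omega : e < k))).add
      ((hM.const_mul d_i).mono (min_le_right _ _))).sub
      ((HasLeadingTermAt.const g_r ξ).of_lt (by omega : e < 0))) heq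
  have hquot : r * (↑(-n) * m₀) / m₀ = -n * r := by push_cast; field_simp
  rw [hquot] at hcoef
  rcases lt_trichotomy (k - 1) (-n) with h | h | h
  · rw [if_pos (by omega), if_pos (by omega), if_neg (by omega)] at hcoef
    have hkn : (k : 𝕜) = n := by
      have := mul_eq_zero.mp (show ((k : 𝕜) - n) * r = 0 by linear_combination hcoef)
      exact sub_eq_zero.mp (this.resolve_right hr)
    exact absurd (Int.cast_injective hkn) (by omega)
  · rw [if_pos (by omega), if_pos (by omega), if_pos (by omega)] at hcoef
    refine ⟨by omega, ?_⟩
    have hk : (k : 𝕜) = 1 - n := by exact_mod_cast (by omega : k = 1 - n)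
    linear_combination hcoef - r * hk
  · rw [if_neg (by omega), if_neg (by omega), if_pos (by omega)] at hcoef
    exact absurd (by simpa using hcoef) (mul_ne_zero hd hm₀)

lemma cgl3_dominant_balance_first (hn : 0 < n) (hm₀ : m₀ ≠ 0) (hr : r ≠ 0)
    (hM : HasLeadingTermAt M (-n) m₀ ξ) (hM' : HasLeadingTermAt (deriv M) (-n - 1) (↑(-n) * m₀) ξ)
    (hM'' : HasLeadingTermAt (deriv (deriv M)) (-n - 1 - 1) (↑(-n - 1) * (↑(-n) * m₀)) ξ)
    (hψ : HasLeadingTermAt ψ (1 - n) r ξ)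
    (heq : ∀ᶠ z in 𝓝[≠] ξ,
      deriv (deriv M) z / (2 * M z) - (deriv M z) ^ 2 / (4 * (M z) ^ 2)
        - csi * deriv M z / (2 * M z) - (ψ z) ^ 2 + d_r * M z + g_i = 0) :
    n = 2 ∧ 2 - r ^ 2 + d_r * m₀ = 0 := by
  set e := min (-2) (2 - 2 * n)
  have h2M := hM.const_mul 2
  have h2m₀ : 2 * m₀ ≠ 0 := mul_ne_zero two_ne_zero hm₀
  have hcoef := HasLeadingTermAt.eq_zero
    (((((((hM''.div h2M h2m₀).mono (by omega)).sub
      (((hM'.pow 2).div ((hM.pow 2).const_mul 4) (by simp [hm₀])).mono (by omega))).sub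
      (((hM'.const_mul csi).div h2M h2m₀).of_lt (by omega : e < -n - 1 - -n))).sub
      ((hψ.pow 2).mono (by omega))).add
      ((hM.const_mul d_r).mono (by omega))).add
      ((HasLeadingTermAt.const g_i ξ).of_lt (by omega : e < 0))) heq
  have hA : ↑(-n - 1) * (↑(-n) * m₀) / (2 * m₀) = n * (n + 1) / 2 := by push_cast; field_simp; ring
  have hB : (↑(-n) * m₀) ^ 2 / (4 * m₀ ^ 2) = n ^ 2 / 4 := by push_cast; field_simp
  rw [hA, hB] at hcoef
  obtain rfl | rfl | hn3 : n = 1 ∨ n = 2 ∨ 3 ≤ n := by omega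
  · rw [if_pos (by omega), if_pos (by omega), if_neg (by omega), if_neg (by omega)] at hcoef
    norm_num at hcoef
  · rw [if_pos (by omega), if_pos (by omega), if_pos (by omega), if_pos (by omega)] at hcoef
    exact ⟨rfl, by linear_combination hcoef⟩
  · rw [if_neg (by omega), if_neg (by omega), if_pos (by omega), if_neg (by omega)] at hcoef
    exact absurd (by linear_combination -hcoef) (pow_ne_zero 2 hr)

end DominantBalance

/-- At a pole `ξ₁` of a meromorphic solution `(M, ψ)` of the CGL3 traveling-wave system,
`M` has a double pole with `m₀ = lim (ξ−ξ₁)² M` satisfying `d_i² m₀² − 9 d_r m₀ − 18 = 0`,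
and `ψ` has a simple pole with residue `d_i m₀/3`. -/
theorem cgl3_first_set_of_poles
    (csi d_r d_i g_r g_i : ℝ) (hd : d_i ≠ 0) (ξ₁ : ℂ)
    (M ψ : ℂ → ℂ) (hM : MeromorphicAt M ξ₁) (hψ : MeromorphicAt ψ ξ₁)
    (heq : ∀ᶠ z in 𝓝[≠] ξ₁,
      (deriv (deriv M) z / (2 * M z) - (deriv M z)^2 / (4 * (M z)^2)
        - (csi : ℂ) * deriv M z / (2 * M z) - (ψ z)^2
        + (d_r : ℂ) * M z + (g_i : ℂ) = 0)
      ∧ (deriv ψ z + ψ z * deriv M z / M z - (csi : ℂ) * ψ z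
        + (d_i : ℂ) * M z - (g_r : ℂ) = 0))
    (hpole : IsPole M ξ₁) :
    ∃ m₀ : ℂ, m₀ ≠ 0
      ∧ Tendsto (fun z => (z - ξ₁)^2 * M z) (𝓝[≠] ξ₁) (𝓝 m₀)
      ∧ IsPole ψ ξ₁
      ∧ Tendsto (fun z => (z - ξ₁) * ψ z) (𝓝[≠] ξ₁) (𝓝 ((d_i : ℂ) * m₀ / 3))
      ∧ (d_i : ℂ)^2 * m₀^2 - 9 * (d_r : ℂ) * m₀ - 18 = 0 := by
  have hd' : (d_i : ℂ) ≠ 0 := Complex.ofReal_ne_zero.mpr hd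
  have heq₁ := heq.mono fun _ hz => hz.1
  have heq₂ := heq.mono fun _ hz => hz.2
  obtain ⟨n, hn, g, hg, hg0, hMg⟩ := hpole.exists_eventuallyEq_zpow_smul hM
  obtain ⟨g₁, hg₁, hg₁ξ, hM'g⟩ := exists_deriv_eventuallyEq_zpow_smul hg hMg
  have hlM := HasLeadingTermAt.of_eventuallyEq_zpow_smul hg.continuousAt hMg
  have hlM' := hg₁ξ ▸ HasLeadingTermAt.of_eventuallyEq_zpow_smul hg₁.continuousAt hM'g
  have hlM'' := hg₁ξ ▸ HasLeadingTermAt.deriv_of_eventuallyEq_zpow_smul hg₁ hM'g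
  obtain ⟨h, hh, hh0, hψh⟩ := (meromorphicOrderAt_ne_top_iff hψ).mp
    (meromorphicOrderAt_ne_top_of_cgl3_second hn hg0 hd' hlM heq₂)
  have hψord := (meromorphicOrderAt_eq_int_iff hψ).mpr ⟨h, hh, hh0, hψh⟩
  have hlψ := HasLeadingTermAt.of_eventuallyEq_zpow_smul hh.continuousAt hψh
  have hlψ' := HasLeadingTermAt.deriv_of_eventuallyEq_zpow_smul hh hψh
  obtain ⟨hk, hres⟩ := cgl3_dominant_balance_second hn hg0 hh0 hd' hlM hlM' hlψ hlψ' heq₂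
  rw [hk] at hlψ
  obtain ⟨rfl, hrel⟩ := cgl3_dominant_balance_first hn hg0 hh0 hlM hlM' hlM'' hlψ heq₁
  have hr : h ξ₁ = d_i * g ξ₁ / 3 := by linear_combination -hres / 3
  refine ⟨g ξ₁, hg0, by simpa [HasLeadingTermAt] using hlM, ?_, ?_, ?_⟩
  · rw [isPole_iff_meromorphicOrderAt_neg hψ, hψord, hk]
    decide
  · simpa [HasLeadingTermAt, hr] using hlψ
  · linear_combination (-9 : ℂ) * hrel + (-9 * (h ξ₁ + d_i * g ξ₁ / 3)) * hr
end

section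
/- Let csi ∈ ℝ and ey ∈ ℝ, let ξ₀ ∈ ℂ, and let D be meromorphic on a neighborhood of ξ₀ with a pole at ξ₀, satisfying on a punctured neighborhood of ξ₀ the ODE (2·D' + csi·D + 24i·ey)·(D' − csi·D − 24i·ey)² + 2^{−11}·(16·(4·D³ − 3·csi·D²) − 9·(csi² + 64i·ey)·(4·D + csi))² = 0. Then the pole of D at ξ₀ is simple and its residue δ satisfies δ³ = 1, i.e. δ ∈ {1, (−1 + i·√3)/2, (−1 − i·√3)/2}. -/
open Filter Topology

/-!
Write `t = z - ξ₀` and let the pole have order `m + 1` with leading coefficient `c ≠ 0`, so that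
`t^(m+1) D → c` and `t^(m+2) D' → -(m+1) c`. Multiplying the subequation by `t^(6(m+1))` turns it
into a polynomial identity in `t`, `t^(m+1) D` and `t^(m+2) D'`, which passes to the limit `t → 0`:
`2 c^6 - 2 (m+1)^3 c^3 · 0^(3m) = 0`. The cubic term `2 D'^3` has weight `3m + 6`, which reaches the
weight `6m + 6` of `(64 D^3)^2 / 2^11` only for `m = 0`; hence the pole is simple and `c^6 = c^3`.
-/

section ZpowNormalForm

variable {𝕜 E : Type*} [NontriviallyNormedField 𝕜] [NormedAddCommGroup E] [NormedSpace 𝕜 E]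
  {f g : 𝕜 → E} {x : 𝕜} {n : ℤ}

theorem tendsto_sub_zpow_neg_smul_of_eventuallyEq (hg : ContinuousAt g x)
    (hfg : f =ᶠ[𝓝[≠] x] fun z ↦ (z - x) ^ n • g z) :
    Tendsto (fun z ↦ (z - x) ^ (-n) • f z) (𝓝[≠] x) (𝓝 (g x)) := by
  refine hg.continuousWithinAt.tendsto.congr' ?_
  filter_upwards [hfg, self_mem_nhdsWithin] with z hz hzx
  rw [hz, smul_smul, ← zpow_add₀ (sub_ne_zero.mpr hzx), neg_add_cancel, zpow_zero, one_smul]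

theorem deriv_eventuallyEq_of_eventuallyEq_sub_zpow_smul [CompleteSpace E] (hg : AnalyticAt 𝕜 g x)
    (hfg : f =ᶠ[𝓝[≠] x] fun z ↦ (z - x) ^ n • g z) :
    deriv f =ᶠ[𝓝[≠] x] fun z ↦ (z - x) ^ (n - 1) • ((n : 𝕜) • g z + (z - x) • deriv g z) := by
  filter_upwards [hg.eventually_analyticAt.filter_mono nhdsWithin_le_nhds,
    self_mem_nhdsWithin, hfg.nhdsNE_deriv] with z hgz hz_ne hz
  have hzx : z - x ≠ 0 := sub_ne_zero.mpr hz_ne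
  have hpow : HasDerivAt (fun w ↦ (w - x) ^ n) ((n : 𝕜) * (z - x) ^ (n - 1)) z :=
    (hasDerivAt_zpow n (z - x) (Or.inl hzx)).comp_sub_const z x
  rw [hz, (hpow.fun_smul hgz.differentiableAt.hasDerivAt).deriv, smul_add, smul_smul, smul_smul,
    ← zpow_add_one₀ hzx, sub_add_cancel, mul_comm, add_comm]

theorem tendsto_sub_zpow_smul_deriv_of_eventuallyEq [CompleteSpace E] (hg : AnalyticAt 𝕜 g x)
    (hfg : f =ᶠ[𝓝[≠] x] fun z ↦ (z - x) ^ n • g z) :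
    Tendsto (fun z ↦ (z - x) ^ (1 - n) • deriv f z) (𝓝[≠] x) (𝓝 ((n : 𝕜) • g x)) := by
  have hcont : ContinuousAt (fun z ↦ (n : 𝕜) • g z + (z - x) • deriv g z) x := by
    have := hg.deriv.continuousAt
    fun_prop
  simpa using tendsto_sub_zpow_neg_smul_of_eventuallyEq hcont
    (deriv_eventuallyEq_of_eventuallyEq_sub_zpow_smul hg hfg)

end ZpowNormalForm

theorem IsPole.meromorphicOrderAt_neg {f : ℂ → ℂ} {x : ℂ} (hpole : IsPole f x)
    (hf : MeromorphicAt f x) : meromorphicOrderAt f x < 0 :=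
  (tendsto_cobounded_iff_meromorphicOrderAt_neg hf).mp (tendsto_norm_atTop_iff_cobounded.mp hpole)

theorem IsPole.exists_tendsto_pow_mul {f : ℂ → ℂ} {x : ℂ} (hpole : IsPole f x)
    (hf : MeromorphicAt f x) :
    ∃ m : ℕ, ∃ c : ℂ, c ≠ 0 ∧ Tendsto (fun z ↦ (z - x) ^ (m + 1) * f z) (𝓝[≠] x) (𝓝 c) ∧
      Tendsto (fun z ↦ (z - x) ^ (m + 2) * deriv f z) (𝓝[≠] x) (𝓝 (-(m + 1) * c)) := by
  obtain ⟨n, hn⟩ := WithTop.ne_top_iff_exists.mp (hpole.meromorphicOrderAt_neg hf).ne_top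
  obtain ⟨g, hg, hgx, hfg⟩ := (meromorphicOrderAt_eq_int_iff hf).mp hn.symm
  have hneg : n < 0 := by exact_mod_cast hn ▸ hpole.meromorphicOrderAt_neg hf
  obtain ⟨m, rfl⟩ := Int.eq_negSucc_of_lt_zero hneg
  refine ⟨m, g x, hgx, ?_, ?_⟩
  · convert tendsto_sub_zpow_neg_smul_of_eventuallyEq hg.continuousAt hfg using 2
    rw [Int.neg_negSucc, zpow_natCast, smul_eq_mul]
  · convert tendsto_sub_zpow_smul_deriv_of_eventuallyEq hg hfg using 2
    · rw [show 1 - Int.negSucc m = (m + 2 : ℕ) by omega, zpow_natCast, smul_eq_mul]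
    · rw [Int.negSucc_eq, smul_eq_mul]
      push_cast
      ring

noncomputable def cglSubequation (a e D D' : ℂ) : ℂ :=
  (2 * D' + a * D + 24 * Complex.I * e) * (D' - a * D - 24 * Complex.I * e) ^ 2
    + (2 : ℂ) ^ (-11 : ℤ) * (16 * (4 * D ^ 3 - 3 * a * D ^ 2)
      - 9 * (a ^ 2 + 64 * Complex.I * e) * (4 * D + a)) ^ 2

noncomputable def cglSubequationScaled (m : ℕ) (a e t G X : ℂ) : ℂ :=
  t ^ (3 * m) * ((2 * X + a * t * G + 24 * Complex.I * e * t ^ (m + 2))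
      * (X - a * t * G - 24 * Complex.I * e * t ^ (m + 2)) ^ 2)
    + (2 : ℂ) ^ (-11 : ℤ) * (64 * G ^ 3 - 48 * a * t ^ (m + 1) * G ^ 2
      - 9 * (a ^ 2 + 64 * Complex.I * e) * (4 * t ^ (2 * m + 2) * G + a * t ^ (3 * m + 3))) ^ 2

theorem pow_mul_cglSubequation (m : ℕ) (a e t D D' : ℂ) :
    t ^ (6 * (m + 1)) * cglSubequation a e D D' =
      cglSubequationScaled m a e t (t ^ (m + 1) * D) (t ^ (m + 2) * D') := by
  unfold cglSubequation cglSubequationScaled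
  ring

theorem tendsto_cglSubequationScaled {α : Type*} {l : Filter α} {t G X : α → ℂ}
    {t₀ G₀ X₀ : ℂ} (m : ℕ) (a e : ℂ) (ht : Tendsto t l (𝓝 t₀)) (hG : Tendsto G l (𝓝 G₀))
    (hX : Tendsto X l (𝓝 X₀)) :
    Tendsto (fun z ↦ cglSubequationScaled m a e (t z) (G z) (X z)) l
      (𝓝 (cglSubequationScaled m a e t₀ G₀ X₀)) := by
  have hcont : Continuous fun p : ℂ × ℂ × ℂ ↦ cglSubequationScaled m a e p.1 p.2.1 p.2.2 := by
    unfold cglSubequationScaled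
    fun_prop
  exact (hcont.tendsto _).comp (ht.prodMk_nhds (hG.prodMk_nhds hX))

theorem cglSubequationScaled_zero (m : ℕ) (a e G X : ℂ) :
    cglSubequationScaled m a e 0 G X = 0 ^ (3 * m) * (2 * X ^ 3) + 2 * G ^ 6 := by
  simp only [cglSubequationScaled, zero_pow (Nat.succ_ne_zero _), mul_zero, sub_zero, add_zero]
  norm_num
  ring

theorem eq_zero_and_pow_three_eq_one_of_cglSubequationScaled_eq_zero {m : ℕ} {a e c : ℂ}
    (hc : c ≠ 0) (h : cglSubequationScaled m a e 0 c (-(m + 1) * c) = 0) :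
    m = 0 ∧ c ^ 3 = 1 := by
  rw [cglSubequationScaled_zero] at h
  rcases m with _ | m
  · refine ⟨rfl, ?_⟩
    have : 2 * c ^ 3 * (c ^ 3 - 1) = 0 := by linear_combination h
    simpa [hc, sub_eq_zero] using this
  · rw [zero_pow (by omega)] at h
    exact absurd (by linear_combination h / 2 : c ^ 6 = 0) (pow_ne_zero 6 hc)

theorem eq_one_or_of_pow_three_eq_one {ω : ℂ} (h : ω ^ 3 = 1) :
    ω = 1 ∨ ω = (-1 + Complex.I * (Real.sqrt 3 : ℂ)) / 2
      ∨ ω = (-1 - Complex.I * (Real.sqrt 3 : ℂ)) / 2 := by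
  have hsqrt : (Complex.I * (Real.sqrt 3 : ℂ)) ^ 2 = -3 := by
    rw [mul_pow, Complex.I_sq, ← Complex.ofReal_pow, Real.sq_sqrt (by norm_num)]
    norm_num
  have hfac : (ω - 1) * (ω - (-1 + Complex.I * (Real.sqrt 3 : ℂ)) / 2)
      * (ω - (-1 - Complex.I * (Real.sqrt 3 : ℂ)) / 2) = 0 := by
    linear_combination h - (ω - 1) / 4 * hsqrt
  simpa [sub_eq_zero, or_assoc] using hfac

/-- Any pole of a meromorphic solution `D` of the first-order third-degree subequation
for `dlogA` is simple, with residue a cube root of unity. -/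
theorem cgl5_dlogA_subequation_pole_residues
    (csi ey : ℝ) (ξ₀ : ℂ)
    (D : ℂ → ℂ) (hD : MeromorphicAt D ξ₀) (hpole : IsPole D ξ₀)
    (hode : ∀ᶠ z in 𝓝[≠] ξ₀,
      (2 * deriv D z + (csi : ℂ) * D z + 24 * Complex.I * (ey : ℂ))
        * (deriv D z - (csi : ℂ) * D z - 24 * Complex.I * (ey : ℂ))^2
      + (2 : ℂ)^(-11 : ℤ)
        * (16 * (4 * (D z)^3 - 3 * (csi : ℂ) * (D z)^2)
            - 9 * ((csi : ℂ)^2 + 64 * Complex.I * (ey : ℂ)) * (4 * D z + (csi : ℂ)))^2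
      = 0) :
    ∃ δ : ℂ, Tendsto (fun z => (z - ξ₀) * D z) (𝓝[≠] ξ₀) (𝓝 δ)
      ∧ δ^3 = 1
      ∧ (δ = 1 ∨ δ = (-1 + Complex.I * (Real.sqrt 3 : ℂ)) / 2
          ∨ δ = (-1 - Complex.I * (Real.sqrt 3 : ℂ)) / 2) := by
  obtain ⟨m, c, hc, hlead, hlead'⟩ := hpole.exists_tendsto_pow_mul hD
  have hsub : Tendsto (fun z ↦ z - ξ₀) (𝓝[≠] ξ₀) (𝓝 0) :=
    tendsto_sub_nhds_zero_iff.mpr nhdsWithin_le_nhds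
  have hlim := tendsto_cglSubequationScaled m csi ey hsub hlead hlead'
  have hvanish : ∀ᶠ z in 𝓝[≠] ξ₀, cglSubequationScaled m csi ey (z - ξ₀) ((z - ξ₀) ^ (m + 1) * D z)
      ((z - ξ₀) ^ (m + 2) * deriv D z) = 0 := by
    filter_upwards [hode] with z hz
    rw [← pow_mul_cglSubequation, cglSubequation, hz, mul_zero]
  obtain ⟨rfl, hc3⟩ := eq_zero_and_pow_three_eq_one_of_cglSubequationScaled_eq_zero hc <|
    tendsto_nhds_unique hlim (tendsto_const_nhds.congr' (hvanish.mono fun _ h ↦ h.symm))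
  exact ⟨c, by simpa using hlead, hc3, eq_one_or_of_pow_three_eq_one hc3⟩
end
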